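/- arXiv:2604.15060 — 2 statements merged into one kernel-verified Lean document; each statement's English description precedes it below -/
import Mathlib

section
/- For all integers n ≥ 0, m ≥ 1, l with l = 0 if m = 1 and 0 ≤ l ≤ m−2 if m ≥ 2, and h with 0 ≤ h ≤ 3(n+m−l)+1, setting ν = 3(n+m)+2 and d = 3(n(3m+1) + 3m(m+1) + h(n+m+1) + l + 1), one has ⌊d/(ν+1)⌋ = 3m+h and ⌊(d−1)/ν⌋ = 3m+h+1. -/
/-- condition (E) for the family 𝒢^{(3)} with x=2, p=3m+1 (Lemma 2.3). -/
theorem stmt11 (n m l h : ℕ) (hm : 1 ≤ m)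
    (hl1 : m = 1 → l = 0) (hl2 : 2 ≤ m → l ≤ m - 2)
    (hh : h ≤ 3 * (n + m - l) + 1) :
    (3 * (n * (3 * m + 1) + 3 * m * (m + 1) + h * (n + m + 1) + l + 1))
        / ((3 * (n + m) + 2) + 1) = 3 * m + h ∧
    (3 * (n * (3 * m + 1) + 3 * m * (m + 1) + h * (n + m + 1) + l + 1) - 1)
        / (3 * (n + m) + 2) = 3 * m + h + 1 := by
  have hlm : l < m := by
    rcases Nat.lt_or_ge m 2 with h' | h'
    · have := hl1 (by omega); omega
    · have := hl2 h'; omega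
  have hh2 : h + 3 * l ≤ 3 * (n + m) + 1 := by omega
  have hd1 : 3 * (n * (3 * m + 1) + 3 * m * (m + 1) + h * (n + m + 1) + l + 1)
      = ((3 * (n + m) + 2) + 1) * (3 * m + h) + (3 * n + 3 * l + 3) := by ring
  have hd2 : 3 * (n * (3 * m + 1) + 3 * m * (m + 1) + h * (n + m + 1) + l + 1) - 1
      = (3 * (n + m) + 2) * (3 * m + h + 1) + (h + 3 * l) := by
    have : 3 * (n * (3 * m + 1) + 3 * m * (m + 1) + h * (n + m + 1) + l + 1)
        = (3 * (n + m) + 2) * (3 * m + h + 1) + (h + 3 * l) + 1 := by ring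
    omega
  constructor
  · rw [hd1, Nat.mul_add_div (by positivity), Nat.div_eq_of_lt (by omega), Nat.add_zero]
  · rw [hd2, Nat.mul_add_div (by positivity), Nat.div_eq_of_lt (by omega), Nat.add_zero]
end

section
/- Let q ≥ 1 be an integer, d = 3q, and ε ≥ 1 an integer. Let 𝒥_d ∈ ℚ[x,y] be the degree-d rational polynomial with 𝒥_d(x,y) = Ĵ_d(x, y/√3) over ℝ, regarded as a polynomial over ℂ. Let G ∈ ℂ[X] be a polynomial of degree d such that every critical value of G lies in {−1,1}, G has exactly one critical point of multiplicity ε with critical value −1, and no critical point of multiplicity ε with critical value 1. Set 𝒰(w) = (G(w)+1)/2 and F(u,v,w) = 𝒥_d(u,v) + 𝒰(w). Then the set of points (u,v,w) ∈ ℂ³ at which F and all three partial derivatives of F vanish and at which w is a root of G′ of multiplicity exactly ε has cardinality exactly d(d−1)/2. -/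
open Real Polynomial

/-- The angle φ_μ = (6μ−1)π/(6d) (the case τ = 0). -/
noncomputable def phiA (d : ℕ) (μ : ℤ) : ℝ := (6 * (μ : ℝ) - 1) * Real.pi / (6 * (d : ℝ))

/-- The polynomial Ĵ_{d,0}(x,y) = λ_d ∏_μ L_{d,0,μ}(x,y). -/
noncomputable def Jhat (d : ℕ) (x y : ℝ) : ℝ :=
  (2 * Real.cos ((d : ℝ) * Real.pi / 2 + 2 * Real.pi / 3)) *
    ∏ μ ∈ Finset.Icc (-(((d : ℤ) - 2) / 2)) (((d : ℤ) + 1) / 2),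
      (y + (Real.cos (2 * phiA d μ) - x) * Real.tan (phiA d μ) + Real.sin (2 * phiA d μ))

/-- Complex partial derivative of `f` at `p` in the `i`-th coordinate direction. -/
noncomputable def pd {n : ℕ} (f : (Fin n → ℂ) → ℂ) (i : Fin n) (p : Fin n → ℂ) : ℂ :=
  deriv (fun t => f (Function.update p i t)) (p i)

noncomputable section
namespace Stmt18

/-! ## Basic data -/

def sIdx (d : ℕ) : Finset ℤ := Finset.Icc (-(((d : ℤ) - 2) / 2)) (((d : ℤ) + 1) / 2)
def lamR (d : ℕ) : ℝ := 2 * Real.cos ((d : ℝ) * Real.pi / 2 + 2 * Real.pi / 3)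
def Aco (d : ℕ) (μ : ℤ) : ℝ := - Real.tan (phiA d μ)
def Cco (d : ℕ) (μ : ℤ) : ℝ :=
  Real.cos (2 * phiA d μ) * Real.tan (phiA d μ) + Real.sin (2 * phiA d μ)
def s3 : ℂ := ((Real.sqrt 3 : ℝ) : ℂ)⁻¹
def Lc (d : ℕ) (μ : ℤ) (u v : ℂ) : ℂ := (Aco d μ : ℂ) * u + s3 * v + (Cco d μ : ℂ)
def fc (d : ℕ) (u v : ℂ) : ℂ := (lamR d : ℂ) * ∏ μ ∈ sIdx d, Lc d μ u v
def derU (d : ℕ) (u v : ℂ) : ℂ :=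
  (lamR d : ℂ) * ∑ μ ∈ sIdx d, (∏ ν ∈ (sIdx d).erase μ, Lc d ν u v) * (Aco d μ : ℂ)
def derV (d : ℕ) (u v : ℂ) : ℂ :=
  (lamR d : ℂ) * ∑ μ ∈ sIdx d, (∏ ν ∈ (sIdx d).erase μ, Lc d ν u v) * s3
def zc (d : ℕ) (μ : ℤ) : ℂ := Complex.exp ((phiA d μ : ℂ) * Complex.I)
def Zc (d : ℕ) (μ : ℤ) : ℂ := zc d μ ^ 2
def cubic (u v Z : ℂ) : ℂ :=
  Z ^ 3 - (u - Complex.I * s3 * v) * Z ^ 2 + (u + Complex.I * s3 * v) * Z - 1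
def aZ (Z1 Z2 : ℂ) : ℂ := (Z1 * Z2 * (Z1 * Z2) + Z1 + Z2) / (Z1 * Z2)
def bZ (Z1 Z2 : ℂ) : ℂ := (Z1 * Z2 * (Z1 + Z2) + 1) / (Z1 * Z2)
def ptu (Z1 Z2 : ℂ) : ℂ := (aZ Z1 Z2 + bZ Z1 Z2) / 2
def ptv (Z1 Z2 : ℂ) : ℂ := (aZ Z1 Z2 - bZ Z1 Z2) * ((Real.sqrt 3 : ℝ) : ℂ) / (2 * Complex.I)
def Pairs (d : ℕ) : Finset (ℤ × ℤ) := (sIdx d ×ˢ sIdx d).filter (fun x => x.1 < x.2)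
def ptf (d : ℕ) (x : ℤ × ℤ) : ℂ × ℂ :=
  (ptu (Zc d x.1) (Zc d x.2), ptv (Zc d x.1) (Zc d x.2))

/-! ## Simple nonvanishing facts -/

lemma sqrt3_ne : (Real.sqrt 3 : ℝ) ≠ 0 := by positivity
lemma sqrt3_ne' : ((Real.sqrt 3 : ℝ) : ℂ) ≠ 0 := Complex.ofReal_ne_zero.mpr sqrt3_ne
lemma s3_ne : s3 ≠ 0 := inv_ne_zero sqrt3_ne'

lemma pi_cancel {a b : ℤ} (h : (a : ℝ) * Real.pi = (b : ℝ) * Real.pi) : a = b := by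
  have := mul_right_cancel₀ Real.pi_ne_zero h
  exact_mod_cast this

lemma cos_phi_ne {d : ℕ} (hd : 0 < d) (μ : ℤ) : Real.cos (phiA d μ) ≠ 0 := by
  intro h
  rw [Real.cos_eq_zero_iff] at h
  obtain ⟨k, hk⟩ := h
  rw [phiA] at hk
  have hd0 : (d : ℝ) ≠ 0 := Nat.cast_ne_zero.mpr hd.ne'
  have h' : ((2 * (6 * μ - 1) : ℤ) : ℝ) * Real.pi = (((2 * k + 1) * (6 * d) : ℤ) : ℝ) * Real.pi := by
    push_cast
    field_simp at hk
    linear_combination Real.pi * hk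
  have h2 : 12 * μ - 2 = 12 * (k * (d:ℤ)) + 6 * (d:ℤ) := by
    have h3 := pi_cancel h'
    ring_nf
    ring_nf at h3
    linarith
  generalize k * (d:ℤ) = K at h2
  omega

lemma lam_ne (d : ℕ) : (2 * Real.cos ((d : ℝ) * Real.pi / 2 + 2 * Real.pi / 3)) ≠ 0 := by
  intro h
  have h2 : Real.cos ((d : ℝ) * Real.pi / 2 + 2 * Real.pi / 3) = 0 := by linarith [h]
  rw [Real.cos_eq_zero_iff] at h2
  obtain ⟨k, hk⟩ := h2
  have h' : ((3 * d + 4 : ℤ) : ℝ) * Real.pi = ((3 * (2 * k + 1) : ℤ) : ℝ) * Real.pi := by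
    push_cast
    linarith
  have := pi_cancel h'
  omega

lemma lamC_ne (d : ℕ) : (lamR d : ℂ) ≠ 0 := by
  rw [lamR]; exact_mod_cast lam_ne d

lemma Zc_eq (d : ℕ) (μ : ℤ) : Zc d μ = Complex.exp (((2 * phiA d μ : ℝ) : ℂ) * Complex.I) := by
  rw [Zc, zc, sq, ← Complex.exp_add]
  congr 1
  push_cast
  ring

lemma zc_ne (d : ℕ) (μ : ℤ) : zc d μ ≠ 0 := Complex.exp_ne_zero _
lemma Zc_ne (d : ℕ) (μ : ℤ) : Zc d μ ≠ 0 := pow_ne_zero _ (zc_ne d μ)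

lemma ofReal_mul_I_eq_zero {a : ℝ} (h : (a : ℂ) * Complex.I = 0) : a = 0 := by
  rcases mul_eq_zero.mp h with h | h
  · exact_mod_cast h
  · exact absurd h Complex.I_ne_zero

lemma mem_sIdx {d : ℕ} {μ : ℤ} (h : μ ∈ sIdx d) :
    -(((d : ℤ) - 2) / 2) ≤ μ ∧ μ ≤ ((d : ℤ) + 1) / 2 := Finset.mem_Icc.mp h

lemma Zc_inj {d : ℕ} (hd : 0 < d) {μ ν : ℤ} (hμ : μ ∈ sIdx d) (hν : ν ∈ sIdx d)
    (h : Zc d μ = Zc d ν) : μ = ν := by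
  rw [Zc_eq, Zc_eq, Complex.exp_eq_exp_iff_exists_int] at h
  obtain ⟨n, hn⟩ := h
  push_cast at hn
  have hre : ((2 * phiA d μ - 2 * phiA d ν - n * (2 * Real.pi) : ℝ) : ℂ) * Complex.I = 0 := by
    push_cast
    linear_combination hn
  have hre' := ofReal_mul_I_eq_zero hre
  have hd0 : (d : ℝ) ≠ 0 := Nat.cast_ne_zero.mpr hd.ne'
  rw [phiA, phiA] at hre'
  have h' : ((μ - ν : ℤ) : ℝ) * Real.pi = ((n * d : ℤ) : ℝ) * Real.pi := by
    push_cast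
    field_simp at hre'
    linarith
  have hZ := pi_cancel h'
  have h1 := mem_sIdx hμ
  have h2 := mem_sIdx hν
  have hn0 : n = 0 := by
    by_contra h0
    have habs : (d : ℤ) ≤ |n * (d : ℤ)| := by
      rw [abs_mul]
      have : 1 ≤ |n| := Int.one_le_abs (by omega)
      nlinarith [abs_nonneg n, abs_of_nonneg (by positivity : (0:ℤ) ≤ (d:ℤ))]
    rw [← hZ] at habs
    rcases abs_cases (μ - ν) with ⟨he, _⟩ | ⟨he, _⟩ <;> omega
  rw [hn0] at hZ
  omega

lemma ZZZ_ne {d : ℕ} (hd : 0 < d) (μ ν ρ : ℤ) : Zc d μ * Zc d ν * Zc d ρ ≠ 1 := by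
  intro h
  rw [Zc_eq, Zc_eq, Zc_eq, ← Complex.exp_add, ← Complex.exp_add, Complex.exp_eq_one_iff] at h
  obtain ⟨n, hn⟩ := h
  push_cast at hn
  have hre : ((2 * phiA d μ + 2 * phiA d ν + 2 * phiA d ρ - n * (2 * Real.pi) : ℝ) : ℂ) * Complex.I = 0 := by
    push_cast
    linear_combination hn
  have hre' := ofReal_mul_I_eq_zero hre
  have hd0 : (d : ℝ) ≠ 0 := Nat.cast_ne_zero.mpr hd.ne'
  rw [phiA, phiA, phiA] at hre'
  have h' : ((2 * (6 * μ - 1) + 2 * (6 * ν - 1) + 2 * (6 * ρ - 1) : ℤ) : ℝ) * Real.pi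
      = ((n * (12 * d) : ℤ) : ℝ) * Real.pi := by
    push_cast
    field_simp at hre'
    linarith
  have hZ := pi_cancel h'
  have h2 : 12 * (μ + ν + ρ) - 6 = 12 * (n * (d:ℤ)) := by
    ring_nf
    ring_nf at hZ
    linarith
  generalize n * (d:ℤ) = K at h2
  omega

/-! ## The exponential form of the lines -/

lemma two_I_sin (θ : ℝ) :
    2 * Complex.I * (Real.sin θ : ℂ) * Complex.exp ((θ : ℂ) * Complex.I)
      = Complex.exp ((θ : ℂ) * Complex.I) ^ 2 - 1 := by
  have hE : Complex.exp (-(θ : ℂ) * Complex.I) * Complex.exp ((θ : ℂ) * Complex.I) = 1 := by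
    rw [← Complex.exp_add]; ring_nf; exact Complex.exp_zero
  rw [Complex.ofReal_sin]
  show 2 * Complex.I * ((Complex.exp (-(θ:ℂ) * Complex.I) - Complex.exp ((θ:ℂ) * Complex.I)) * Complex.I / 2) * Complex.exp ((θ : ℂ) * Complex.I) = _
  linear_combination (Complex.I ^ 2) * hE + (1 - Complex.exp ((θ:ℂ) * Complex.I) ^ 2) * Complex.I_sq

lemma two_cos (θ : ℝ) :
    2 * (Real.cos θ : ℂ) * Complex.exp ((θ : ℂ) * Complex.I)
      = Complex.exp ((θ : ℂ) * Complex.I) ^ 2 + 1 := by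
  have hE : Complex.exp (-(θ : ℂ) * Complex.I) * Complex.exp ((θ : ℂ) * Complex.I) = 1 := by
    rw [← Complex.exp_add]; ring_nf; exact Complex.exp_zero
  rw [Complex.ofReal_cos]
  show 2 * ((Complex.exp ((θ:ℂ) * Complex.I) + Complex.exp (-(θ:ℂ) * Complex.I)) / 2) * Complex.exp ((θ : ℂ) * Complex.I) = _
  linear_combination hE

lemma exp_three (θ : ℝ) :
    Complex.exp (((3 * θ : ℝ) : ℂ) * Complex.I) = Complex.exp ((θ : ℂ) * Complex.I) ^ 3 := by
  push_cast
  rw [show ((3:ℂ) * (θ:ℂ)) * Complex.I = (θ:ℂ) * Complex.I + ((θ:ℂ) * Complex.I + (θ:ℂ) * Complex.I) by ring,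
    Complex.exp_add, Complex.exp_add]
  ring

lemma line_mul (d : ℕ) (μ : ℤ) (hcos : Real.cos (phiA d μ) ≠ 0) (u v : ℂ) :
    Lc d μ u v * ((Real.cos (phiA d μ) : ℂ) * (2 * Complex.I * (zc d μ) ^ 3))
      = cubic u v (Zc d μ) := by
  set φ := phiA d μ with hφ
  have h1 : (Real.cos φ : ℂ) * (Real.tan φ : ℂ) = (Real.sin φ : ℂ) := by
    have : Real.cos φ * Real.tan φ = Real.sin φ := by
      rw [Real.tan_eq_sin_div_cos]; field_simp
    exact_mod_cast congrArg (Complex.ofReal) this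
  have h2 : (Real.cos φ : ℂ) * (Cco d μ : ℂ) = (Real.sin (3 * φ) : ℂ) := by
    have : Real.cos φ * Cco d μ = Real.sin (3 * φ) := by
      rw [Cco, ← hφ, Real.tan_eq_sin_div_cos, show (3:ℝ) * φ = φ + 2 * φ by ring, Real.sin_add]
      field_simp
    exact_mod_cast congrArg (Complex.ofReal) this
  have h3 := two_I_sin φ
  have h4 := two_cos φ
  have h5 := two_I_sin (3 * φ)
  rw [exp_three] at h5
  have hA : ((Aco d μ : ℝ) : ℂ) = -(Real.tan φ : ℂ) := by rw [Aco]; push_cast; ring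
  rw [Lc, cubic, Zc, zc, hA]
  set E := Complex.exp ((φ : ℂ) * Complex.I) with hE
  linear_combination (-(2 * Complex.I * E ^ 3 * u)) * h1 + (2 * Complex.I * E ^ 3) * h2
    + (-(u * E ^ 2)) * h3 + (Complex.I * s3 * v * E ^ 2) * h4 + h5

lemma line_iff {d : ℕ} (hd : 0 < d) (μ : ℤ) (u v : ℂ) :
    Lc d μ u v = 0 ↔ cubic u v (Zc d μ) = 0 := by
  have hm := line_mul d μ (cos_phi_ne hd μ) u v
  have hmul : ((Real.cos (phiA d μ) : ℂ) * (2 * Complex.I * (zc d μ) ^ 3)) ≠ 0 :=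
    mul_ne_zero (Complex.ofReal_ne_zero.mpr (cos_phi_ne hd μ))
      (mul_ne_zero (mul_ne_zero two_ne_zero Complex.I_ne_zero) (pow_ne_zero _ (zc_ne d μ)))
  constructor
  · intro h; rw [← hm, h, zero_mul]
  · intro h
    rw [← hm] at h
    rcases mul_eq_zero.mp h with h' | h'
    · exact h'
    · exact absurd h' hmul

/-! ## Algebra of the cubic -/

lemma pt_wpl {Z1 Z2 : ℂ} :
    ptu Z1 Z2 + Complex.I * s3 * ptv Z1 Z2 = aZ Z1 Z2 := by
  rw [ptu, ptv, s3]
  field_simp [Complex.I_ne_zero]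
  ring

lemma pt_wbar {Z1 Z2 : ℂ} :
    ptu Z1 Z2 - Complex.I * s3 * ptv Z1 Z2 = bZ Z1 Z2 := by
  rw [ptu, ptv, s3]
  field_simp [Complex.I_ne_zero]
  ring

lemma pt_root {Z1 Z2 : ℂ} (h1 : Z1 ≠ 0) (h2 : Z2 ≠ 0) :
    cubic (ptu Z1 Z2) (ptv Z1 Z2) Z1 = 0 ∧ cubic (ptu Z1 Z2) (ptv Z1 Z2) Z2 = 0 := by
  constructor <;>
  · rw [cubic, pt_wpl, pt_wbar, aZ, bZ]
    field_simp
    ring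

lemma cubic_uniq {u v Z1 Z2 : ℂ} (h1 : Z1 ≠ 0) (h2 : Z2 ≠ 0) (h12 : Z1 ≠ Z2)
    (e1 : cubic u v Z1 = 0) (e2 : cubic u v Z2 = 0) :
    u = ptu Z1 Z2 ∧ v = ptv Z1 Z2 := by
  rw [cubic] at e1 e2
  have hsub : Z2 - Z1 ≠ 0 := sub_ne_zero.mpr (Ne.symm h12)
  have hX : (u + Complex.I * s3 * v) * (Z1 * Z2 * (Z2 - Z1))
      = (Z1 * Z2 * (Z1 * Z2) + Z1 + Z2) * (Z2 - Z1) := by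
    linear_combination Z2 ^ 2 * e1 - Z1 ^ 2 * e2
  have hY : (u - Complex.I * s3 * v) * (Z1 * Z2 * (Z2 - Z1))
      = (Z1 * Z2 * (Z1 + Z2) + 1) * (Z2 - Z1) := by
    linear_combination Z2 * e1 - Z1 * e2
  have hX' : (u + Complex.I * s3 * v) * (Z1 * Z2) = Z1 * Z2 * (Z1 * Z2) + Z1 + Z2 :=
    mul_right_cancel₀ hsub (by linear_combination hX)
  have hY' : (u - Complex.I * s3 * v) * (Z1 * Z2) = Z1 * Z2 * (Z1 + Z2) + 1 :=
    mul_right_cancel₀ hsub (by linear_combination hY)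
  have hXa : u + Complex.I * s3 * v = aZ Z1 Z2 := by
    rw [aZ]
    field_simp
    linear_combination hX'
  have hYb : u - Complex.I * s3 * v = bZ Z1 Z2 := by
    rw [bZ]
    field_simp
    linear_combination hY'
  constructor
  · rw [ptu, ← hXa, ← hYb]; ring
  · rw [ptv, ← hXa, ← hYb, s3]
    field_simp [Complex.I_ne_zero]
    ring

lemma vieta3 {u v Z1 Z2 Z3 : ℂ} (h12 : Z1 ≠ Z2) (h13 : Z1 ≠ Z3) (h23 : Z2 ≠ Z3)
    (e1 : cubic u v Z1 = 0) (e2 : cubic u v Z2 = 0) (e3 : cubic u v Z3 = 0) :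
    Z1 * Z2 * Z3 = 1 := by
  rw [cubic] at e1 e2 e3
  have key : (Z1 * Z2 * Z3 - 1) * ((Z1 - Z2) * ((Z2 - Z3) * (Z3 - Z1))) = 0 := by
    linear_combination (-(Z2 * Z3 * (Z2 - Z3))) * e1 + (-(Z3 * Z1 * (Z3 - Z1))) * e2
      + (-(Z1 * Z2 * (Z1 - Z2))) * e3
  rcases mul_eq_zero.mp key with h | h
  · exact sub_eq_zero.mp h
  · exfalso
    rcases mul_eq_zero.mp h with h' | h'
    · exact h12 (sub_eq_zero.mp h')
    · rcases mul_eq_zero.mp h' with h'' | h''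
      · exact h23 (sub_eq_zero.mp h'')
      · exact h13 (sub_eq_zero.mp h'').symm

/-! ## Derivatives of fc -/

lemma hasDerivAt_fc_u (d : ℕ) (v u : ℂ) :
    HasDerivAt (fun t => fc d t v) (derU d u v) u := by
  have h : ∀ μ ∈ sIdx d, HasDerivAt (fun t => Lc d μ t v) ((Aco d μ : ℂ)) u := by
    intro μ _
    have := (((hasDerivAt_id u).const_mul ((Aco d μ : ℂ))).add_const (s3 * v)).add_const
      ((Cco d μ : ℂ))
    simpa [Lc] using this
  have h2 := (HasDerivAt.finset_prod h).const_mul ((lamR d : ℂ))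
  simpa [fc, derU, smul_eq_mul, mul_comm] using h2

lemma hasDerivAt_fc_v (d : ℕ) (u v : ℂ) :
    HasDerivAt (fun t => fc d u t) (derV d u v) v := by
  have h : ∀ μ ∈ sIdx d, HasDerivAt (fun t => Lc d μ u t) s3 v := by
    intro μ _
    have := (((hasDerivAt_id v).const_mul s3).add_const ((Cco d μ : ℂ))).const_add
      ((Aco d μ : ℂ) * u)
    simpa [Lc, add_assoc] using this
  have h2 := (HasDerivAt.finset_prod h).const_mul ((lamR d : ℂ))
  simpa [fc, derV, smul_eq_mul, mul_comm] using h2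

lemma zero_of_two_lines {d : ℕ} {u v : ℂ} {μ ν : ℤ} (hμ : μ ∈ sIdx d) (hν : ν ∈ sIdx d)
    (hne : μ ≠ ν) (h1 : Lc d μ u v = 0) (h2 : Lc d ν u v = 0) :
    fc d u v = 0 ∧ derU d u v = 0 ∧ derV d u v = 0 := by
  have hprod : ∀ i : ℤ, (∏ ρ ∈ (sIdx d).erase i, Lc d ρ u v) = 0 := by
    intro i
    rcases eq_or_ne i μ with rfl | hiμ
    · exact Finset.prod_eq_zero (Finset.mem_erase.mpr ⟨hne.symm, hν⟩) h2
    · exact Finset.prod_eq_zero (Finset.mem_erase.mpr ⟨hiμ.symm, hμ⟩) h1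
  refine ⟨?_, ?_, ?_⟩
  · rw [fc, Finset.prod_eq_zero hμ h1, mul_zero]
  · rw [derU]
    rw [Finset.sum_congr rfl (fun i _ => by rw [hprod i, zero_mul])]
    simp
  · rw [derV]
    rw [Finset.sum_congr rfl (fun i _ => by rw [hprod i, zero_mul])]
    simp

lemma two_lines_of_zero {d : ℕ} {u v : ℂ}
    (h0 : fc d u v = 0) (hV : derV d u v = 0) :
    ∃ μ ∈ sIdx d, ∃ ν ∈ sIdx d, μ ≠ ν ∧ Lc d μ u v = 0 ∧ Lc d ν u v = 0 := by
  rw [fc, mul_eq_zero] at h0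
  rcases h0 with h0 | h0
  · exact absurd h0 (lamC_ne d)
  obtain ⟨μ, hμ, hLμ⟩ := Finset.prod_eq_zero_iff.mp h0
  by_contra hcon
  push_neg at hcon
  have honly : ∀ ν ∈ (sIdx d).erase μ, Lc d ν u v ≠ 0 := by
    intro ν hν'
    obtain ⟨hνμ, hν⟩ := Finset.mem_erase.mp hν'
    intro hLν
    exact (hcon μ hμ ν hν (Ne.symm hνμ) hLμ) hLν
  have hsum : (∑ i ∈ sIdx d, (∏ ρ ∈ (sIdx d).erase i, Lc d ρ u v) * s3)
      = (∏ ρ ∈ (sIdx d).erase μ, Lc d ρ u v) * s3 := by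
    refine Finset.sum_eq_single_of_mem μ hμ ?_
    intro i hi hiμ
    have : (∏ ρ ∈ (sIdx d).erase i, Lc d ρ u v) = 0 :=
      Finset.prod_eq_zero (Finset.mem_erase.mpr ⟨Ne.symm hiμ, hμ⟩) hLμ
    rw [this, zero_mul]
  rw [derV, hsum] at hV
  have hne : (∏ ρ ∈ (sIdx d).erase μ, Lc d ρ u v) ≠ 0 := Finset.prod_ne_zero_iff.mpr honly
  exact (mul_ne_zero (lamC_ne d) (mul_ne_zero hne s3_ne)) hV

/-! ## The rational polynomial -/

def Qpoly (d : ℕ) : MvPolynomial (Fin 2) ℝ :=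
  MvPolynomial.C (lamR d) *
    ∏ μ ∈ sIdx d, (MvPolynomial.C (Aco d μ) * MvPolynomial.X 0
      + MvPolynomial.C ((Real.sqrt 3)⁻¹) * MvPolynomial.X 1 + MvPolynomial.C (Cco d μ))

lemma Qpoly_eval (d : ℕ) (x y : ℝ) :
    MvPolynomial.eval ![x, y] (Qpoly d) = Jhat d x (y / Real.sqrt 3) := by
  rw [Qpoly, Jhat, map_mul, map_prod, MvPolynomial.eval_C]
  rw [lamR]
  congr 1
  refine Finset.prod_congr rfl ?_
  intro μ _
  rw [map_add, map_add, map_mul, map_mul, MvPolynomial.eval_C, MvPolynomial.eval_C,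
    MvPolynomial.eval_C, MvPolynomial.eval_X, MvPolynomial.eval_X]
  show Aco d μ * (![x, y] 0) + (Real.sqrt 3)⁻¹ * (![x, y] 1) + Cco d μ = _
  simp only [Matrix.cons_val_zero, Matrix.cons_val_one, Matrix.head_cons]
  rw [Aco, Cco]
  ring

lemma Qpoly_evalC (d : ℕ) (u v : ℂ) :
    MvPolynomial.eval ![u, v] (MvPolynomial.map (algebraMap ℝ ℂ) (Qpoly d)) = fc d u v := by
  rw [Qpoly, map_mul, map_prod, map_mul, map_prod, MvPolynomial.map_C, MvPolynomial.eval_C]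
  rw [fc]
  congr 1
  refine Finset.prod_congr rfl fun μ _ => ?_
  rw [Lc, s3]
  simp [Complex.coe_algebraMap]

lemma P_eq_Q {d : ℕ} {P : MvPolynomial (Fin 2) ℚ}
    (hP : ∀ x y : ℝ, (MvPolynomial.aeval ![x, y] P : ℝ) = Jhat d x (y / Real.sqrt 3)) :
    MvPolynomial.map (algebraMap ℚ ℝ) P = Qpoly d := by
  apply MvPolynomial.funext
  intro x
  have hx : ![x 0, x 1] = x := by
    funext i
    fin_cases i <;> simp
  rw [← MvPolynomial.eval₂_eq_eval_map, ← MvPolynomial.aeval_def, ← hx, hP (x 0) (x 1),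
    ← Qpoly_eval, hx]

lemma aeval_P_eq_fc {d : ℕ} {P : MvPolynomial (Fin 2) ℚ}
    (hP : ∀ x y : ℝ, (MvPolynomial.aeval ![x, y] P : ℝ) = Jhat d x (y / Real.sqrt 3))
    (u v : ℂ) : (MvPolynomial.aeval ![u, v] P : ℂ) = fc d u v := by
  rw [MvPolynomial.aeval_def, MvPolynomial.eval₂_eq_eval_map,
    IsScalarTower.algebraMap_eq ℚ ℝ ℂ, ← MvPolynomial.map_map, P_eq_Q hP, Qpoly_evalC]

/-! ## Counting -/

lemma card_sIdx (d : ℕ) (hd : 0 < d) : (sIdx d).card = d := by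
  rw [sIdx, Int.card_Icc]
  omega

lemma card_Pairs (d : ℕ) (hd : 0 < d) : (Pairs d).card * 2 = d * d - d := by
  classical
  have hswap : (Pairs d).card = ((sIdx d ×ˢ sIdx d).filter (fun x => x.2 < x.1)).card := by
    apply Finset.card_bij (fun a _ => a.swap)
    · intro a ha
      simp only [Pairs, Finset.mem_filter, Finset.mem_product] at ha ⊢
      exact ⟨⟨ha.1.2, ha.1.1⟩, ha.2⟩
    · intro a ha b hb hab
      exact Prod.ext (congrArg Prod.snd hab) (congrArg Prod.fst hab)
    · intro b hb
      simp only [Finset.mem_filter, Finset.mem_product] at hb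
      exact ⟨b.swap, by simp [Pairs, Finset.mem_filter, Finset.mem_product, hb.1.1, hb.1.2, hb.2], by simp⟩
  have hunion : (Pairs d) ∪ ((sIdx d ×ˢ sIdx d).filter (fun x => x.2 < x.1)) = (sIdx d).offDiag := by
    ext a
    simp only [Pairs, Finset.mem_union, Finset.mem_filter, Finset.mem_product, Finset.mem_offDiag]
    constructor
    · rintro (⟨⟨h1, h2⟩, h3⟩ | ⟨⟨h1, h2⟩, h3⟩)
      · exact ⟨h1, h2, h3.ne⟩
      · exact ⟨h1, h2, h3.ne'⟩
    · rintro ⟨h1, h2, h3⟩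
      rcases lt_or_gt_of_ne h3 with h | h
      · exact Or.inl ⟨⟨h1, h2⟩, h⟩
      · exact Or.inr ⟨⟨h1, h2⟩, h⟩
  have hdisj : Disjoint (Pairs d) ((sIdx d ×ˢ sIdx d).filter (fun x => x.2 < x.1)) := by
    rw [Finset.disjoint_left]
    intro a ha hb
    simp only [Pairs, Finset.mem_filter] at ha hb
    exact absurd hb.2 (not_lt.mpr ha.2.le)
  have hcard := Finset.card_union_of_disjoint hdisj
  rw [hunion, Finset.offDiag_card, card_sIdx d hd, ← hswap] at hcard
  omega

/-! ## The singular set in ℂ² -/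

def Sing (d : ℕ) : Set (ℂ × ℂ) :=
  {z | fc d z.1 z.2 = 0 ∧ derU d z.1 z.2 = 0 ∧ derV d z.1 z.2 = 0}

lemma Sing_eq (d : ℕ) (hd : 0 < d) : Sing d = ↑((Pairs d).image (ptf d)) := by
  ext z
  simp only [Sing, Set.mem_setOf_eq, Finset.coe_image, Set.mem_image, Finset.mem_coe]
  constructor
  · rintro ⟨h0, hU, hV⟩
    obtain ⟨μ, hμ, ν, hν, hμν, hLμ, hLν⟩ := two_lines_of_zero h0 hV
    have hcμ := (line_iff hd μ z.1 z.2).mp hLμ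
    have hcν := (line_iff hd ν z.1 z.2).mp hLν
    have hZne : Zc d μ ≠ Zc d ν := fun h => hμν (Zc_inj hd hμ hν h)
    rcases lt_or_gt_of_ne hμν with hlt | hlt
    · refine ⟨(μ, ν), ?_, ?_⟩
      · simp only [Pairs, Finset.mem_filter, Finset.mem_product]
        exact ⟨⟨hμ, hν⟩, hlt⟩
      · obtain ⟨hu, hv⟩ := cubic_uniq (Zc_ne d μ) (Zc_ne d ν) hZne hcμ hcν
        rw [ptf]
        exact Prod.ext hu.symm hv.symm
    · refine ⟨(ν, μ), ?_, ?_⟩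
      · simp only [Pairs, Finset.mem_filter, Finset.mem_product]
        exact ⟨⟨hν, hμ⟩, hlt⟩
      · obtain ⟨hu, hv⟩ := cubic_uniq (Zc_ne d ν) (Zc_ne d μ) (Ne.symm hZne) hcν hcμ
        rw [ptf]
        exact Prod.ext hu.symm hv.symm
  · rintro ⟨x, hx, rfl⟩
    simp only [Pairs, Finset.mem_filter, Finset.mem_product] at hx
    obtain ⟨⟨h1, h2⟩, hlt⟩ := hx
    obtain ⟨hr1, hr2⟩ := pt_root (Zc_ne d x.1) (Zc_ne d x.2)
    have hL1 : Lc d x.1 (ptf d x).1 (ptf d x).2 = 0 := (line_iff hd x.1 _ _).mpr hr1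
    have hL2 : Lc d x.2 (ptf d x).1 (ptf d x).2 = 0 := (line_iff hd x.2 _ _).mpr hr2
    exact zero_of_two_lines h1 h2 hlt.ne hL1 hL2

lemma ptf_injOn (d : ℕ) (hd : 0 < d) : Set.InjOn (ptf d) ↑(Pairs d) := by
  intro x hx y hy hxy
  simp only [Finset.mem_coe, Pairs, Finset.mem_filter, Finset.mem_product] at hx hy
  obtain ⟨⟨hx1, hx2⟩, hxlt⟩ := hx
  obtain ⟨⟨hy1, hy2⟩, hylt⟩ := hy
  set u := (ptf d x).1
  set v := (ptf d x).2
  obtain ⟨hrx1, hrx2⟩ := pt_root (Zc_ne d x.1) (Zc_ne d x.2)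
  obtain ⟨hry1, hry2⟩ := pt_root (Zc_ne d y.1) (Zc_ne d y.2)
  have hrx1 : cubic u v (Zc d x.1) = 0 := hrx1
  have hrx2 : cubic u v (Zc d x.2) = 0 := hrx2
  have hry1 : cubic u v (Zc d y.1) = 0 := by
    have : (ptf d y).1 = u ∧ (ptf d y).2 = v := by
      rw [← hxy]; exact ⟨rfl, rfl⟩
    rw [← this.1, ← this.2]; exact hry1
  have hry2 : cubic u v (Zc d y.2) = 0 := by
    have : (ptf d y).1 = u ∧ (ptf d y).2 = v := by
      rw [← hxy]; exact ⟨rfl, rfl⟩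
    rw [← this.1, ← this.2]; exact hry2
  by_contra hne
  -- find ρ among {y.1, y.2} not in {x.1, x.2} (or symmetric)
  have key : ∀ ρ : ℤ, ρ ∈ sIdx d → ρ ≠ x.1 → ρ ≠ x.2 → cubic u v (Zc d ρ) = 0 → False := by
    intro ρ hρ hρ1 hρ2 hρc
    have hZ12 : Zc d x.1 ≠ Zc d x.2 := fun h => hxlt.ne (Zc_inj hd hx1 hx2 h)
    have hZ1ρ : Zc d x.1 ≠ Zc d ρ := fun h => hρ1 (Zc_inj hd hρ hx1 h.symm).symm.symm
    have hZ2ρ : Zc d x.2 ≠ Zc d ρ := fun h => hρ2 (Zc_inj hd hρ hx2 h.symm).symm.symm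
    exact ZZZ_ne hd x.1 x.2 ρ (vieta3 hZ12 hZ1ρ hZ2ρ hrx1 hrx2 hρc)
  rcases eq_or_ne y.1 x.1 with hA | hA
  · -- y.1 = x.1, so y.2 must differ from both or pairs equal
    rcases eq_or_ne y.2 x.2 with hB | hB
    · exact hne (Prod.ext hA hB).symm
    · have hB1 : y.2 ≠ x.1 := by omega
      exact key y.2 hy2 hB1 hB hry2
  · rcases eq_or_ne y.1 x.2 with hA2 | hA2
    · -- y.1 = x.2 < y.2, so y.2 ∉ {x.1, x.2}
      have hB1 : y.2 ≠ x.1 := by omega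
      have hB2 : y.2 ≠ x.2 := by omega
      exact key y.2 hy2 hB1 hB2 hry2
    · exact key y.1 hy1 hA hA2 hry1

end Stmt18
end

open Stmt18

/-- the claim 𝒩(𝒮_𝒥, A_ε) = d(d−1)/2 for ε ≠ 0, stated after Theorem 3.3. -/
theorem stmt18 (q : ℕ) (hq : 1 ≤ q) (d : ℕ) (hd : d = 3 * q) (ε : ℕ) (hε : 1 ≤ ε)
    (P : MvPolynomial (Fin 2) ℚ) (hdeg : P.totalDegree = d)
    (hP : ∀ x y : ℝ, (MvPolynomial.aeval ![x, y] P : ℝ) = Jhat d x (y / Real.sqrt 3))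
    (G : Polynomial ℂ) (hGdeg : G.natDegree = d)
    (hGcv : ∀ w : ℂ, G.derivative.eval w = 0 → G.eval w = -1 ∨ G.eval w = 1)
    (hG1 : {w : ℂ | G.derivative.rootMultiplicity w = ε ∧ G.eval w = -1}.ncard = 1)
    (hG2 : {w : ℂ | G.derivative.rootMultiplicity w = ε ∧ G.eval w = 1} = ∅)
    (F : (Fin 3 → ℂ) → ℂ)
    (hF : ∀ p : Fin 3 → ℂ,
      F p = (MvPolynomial.aeval ![p 0, p 1] P : ℂ) + (G.eval (p 2) + 1) / 2) :
    {p : Fin 3 → ℂ | F p = 0 ∧ (∀ i, pd F i p = 0) ∧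
        G.derivative.rootMultiplicity (p 2) = ε}.ncard
      = d * (d - 1) / 2 := by
  have hd0 : 0 < d := by omega
  -- the unique critical point of multiplicity ε
  have hG'ne : G.derivative ≠ 0 := by
    intro h
    rw [h] at hG1
    have hempty : {w : ℂ | (0 : Polynomial ℂ).rootMultiplicity w = ε ∧ (0:ℂ) - 1 = -1} = ∅ := by
      ext w
      simp only [Set.mem_setOf_eq, Set.mem_empty_iff_false, iff_false, not_and]
      intro h0
      exfalso
      rw [Polynomial.rootMultiplicity_zero] at h0
      omega
    have : {w : ℂ | (0 : Polynomial ℂ).rootMultiplicity w = ε ∧ G.eval w = -1} = ∅ := by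
      ext w
      simp only [Set.mem_setOf_eq, Set.mem_empty_iff_false, iff_false, not_and]
      intro h0
      rw [Polynomial.rootMultiplicity_zero] at h0
      omega
    rw [this] at hG1
    simp at hG1
  obtain ⟨w₀, hw₀⟩ := Set.ncard_eq_one.mp hG1
  have hw₀mem : G.derivative.rootMultiplicity w₀ = ε ∧ G.eval w₀ = -1 := by
    have : w₀ ∈ {w : ℂ | G.derivative.rootMultiplicity w = ε ∧ G.eval w = -1} := by
      rw [hw₀]; exact rfl
    exact this
  have hmult : ∀ w : ℂ, G.derivative.rootMultiplicity w = ε →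
      G.derivative.eval w = 0 ∧ G.eval w = -1 ∧ w = w₀ := by
    intro w hw
    have hroot : G.derivative.eval w = 0 := by
      have hpos : 0 < Polynomial.rootMultiplicity w G.derivative := by omega
      exact (Polynomial.rootMultiplicity_pos hG'ne).mp hpos
    have hval : G.eval w = -1 := by
      rcases hGcv w hroot with h | h
      · exact h
      · exfalso
        have : w ∈ {w : ℂ | G.derivative.rootMultiplicity w = ε ∧ G.eval w = 1} := ⟨hw, h⟩
        rw [hG2] at this
        exact this
    have hmem : w ∈ {w : ℂ | G.derivative.rootMultiplicity w = ε ∧ G.eval w = -1} := ⟨hw, hval⟩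
    rw [hw₀] at hmem
    exact ⟨hroot, hval, hmem⟩
  -- F in terms of fc
  have hFeq : ∀ p : Fin 3 → ℂ, F p = fc d (p 0) (p 1) + (G.eval (p 2) + 1) / 2 := by
    intro p
    rw [hF, aeval_P_eq_fc hP]
  have hpd0 : ∀ p : Fin 3 → ℂ, pd F 0 p = derU d (p 0) (p 1) := by
    intro p
    have hfun : (fun t => F (Function.update p 0 t))
        = fun t => fc d t (p 1) + (G.eval (p 2) + 1) / 2 := by
      funext t
      rw [hFeq]
      have e0 : Function.update p 0 t 0 = t := Function.update_self _ _ _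
      have e1 : Function.update p 0 t 1 = p 1 := Function.update_of_ne (by decide) _ _
      have e2 : Function.update p 0 t 2 = p 2 := Function.update_of_ne (by decide) _ _
      rw [e0, e1, e2]
    rw [pd, hfun]
    exact ((hasDerivAt_fc_u d (p 1) (p 0)).add_const _).deriv
  have hpd1 : ∀ p : Fin 3 → ℂ, pd F 1 p = derV d (p 0) (p 1) := by
    intro p
    have hfun : (fun t => F (Function.update p 1 t))
        = fun t => fc d (p 0) t + (G.eval (p 2) + 1) / 2 := by
      funext t
      rw [hFeq]
      have e0 : Function.update p 1 t 0 = p 0 := Function.update_of_ne (by decide) _ _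
      have e1 : Function.update p 1 t 1 = t := Function.update_self _ _ _
      have e2 : Function.update p 1 t 2 = p 2 := Function.update_of_ne (by decide) _ _
      rw [e0, e1, e2]
    rw [pd, hfun]
    exact ((hasDerivAt_fc_v d (p 0) (p 1)).add_const _).deriv
  have hpd2 : ∀ p : Fin 3 → ℂ, pd F 2 p = G.derivative.eval (p 2) / 2 := by
    intro p
    have hfun : (fun t => F (Function.update p 2 t))
        = fun t => fc d (p 0) (p 1) + (Polynomial.eval t G + 1) / 2 := by
      funext t
      rw [hFeq]
      have e0 : Function.update p 2 t 0 = p 0 := Function.update_of_ne (by decide) _ _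
      have e1 : Function.update p 2 t 1 = p 1 := Function.update_of_ne (by decide) _ _
      have e2 : Function.update p 2 t 2 = t := Function.update_self _ _ _
      rw [e0, e1, e2]
    rw [pd, hfun]
    have hda := (((Polynomial.hasDerivAt G (p 2)).add_const 1).div_const 2).const_add
      (fc d (p 0) (p 1))
    exact hda.deriv
  -- set equality
  have hSet : {p : Fin 3 → ℂ | F p = 0 ∧ (∀ i, pd F i p = 0) ∧
      G.derivative.rootMultiplicity (p 2) = ε}
      = (fun z : ℂ × ℂ => ![z.1, z.2, w₀]) '' Sing d := by
    ext p
    simp only [Set.mem_setOf_eq, Set.mem_image]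
    constructor
    · rintro ⟨hF0, hpds, hm⟩
      obtain ⟨hroot, hval, hw⟩ := hmult (p 2) hm
      refine ⟨(p 0, p 1), ⟨?_, ?_, ?_⟩, ?_⟩
      · have h := hF0
        rw [hFeq p, hval] at h
        linear_combination h
      · rw [← hpd0 p]; exact hpds 0
      · rw [← hpd1 p]; exact hpds 1
      · funext i
        fin_cases i
        · rfl
        · rfl
        · exact hw.symm
    · rintro ⟨z, ⟨h0, hU, hV⟩, rfl⟩
      have e0 : (![z.1, z.2, w₀] : Fin 3 → ℂ) 0 = z.1 := rfl
      have e1 : (![z.1, z.2, w₀] : Fin 3 → ℂ) 1 = z.2 := rfl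
      have e2 : (![z.1, z.2, w₀] : Fin 3 → ℂ) 2 = w₀ := rfl
      have hroot := (hmult w₀ hw₀mem.1).1
      refine ⟨?_, ?_, ?_⟩
      · rw [hFeq, e0, e1, e2, hw₀mem.2, h0]
        norm_num
      · intro i
        have h0' : pd F 0 ![z.1, z.2, w₀] = 0 := by rw [hpd0, e0, e1]; exact hU
        have h1' : pd F 1 ![z.1, z.2, w₀] = 0 := by rw [hpd1, e0, e1]; exact hV
        have h2' : pd F 2 ![z.1, z.2, w₀] = 0 := by rw [hpd2, e2, hroot]; norm_num
        fin_cases i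
        · exact h0'
        · exact h1'
        · exact h2'
      · rw [e2]; exact hw₀mem.1
  rw [hSet]
  have hinj : Function.Injective (fun z : ℂ × ℂ => (![z.1, z.2, w₀] : Fin 3 → ℂ)) := by
    intro a b hab
    have h1 := congrFun hab 0
    have h2 := congrFun hab 1
    exact Prod.ext h1 h2
  rw [Set.ncard_image_of_injective _ hinj, Sing_eq d hd0, Set.ncard_coe_finset,
    Finset.card_image_of_injOn (ptf_injOn d hd0)]
  have hc := card_Pairs d hd0
  have hd1 : d * (d - 1) + d = d * d := by
    obtain ⟨e, rfl⟩ : ∃ e, d = e + 1 := ⟨d - 1, by omega⟩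
    simp only [Nat.add_sub_cancel]
    ring
  rw [← hd1] at hc
  simp only [Nat.add_sub_cancel] at hc
  omega
end
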